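/- Let α ≥ 0 be a real number. If φ : ℝ → ℝ is a twice differentiable function satisfying φ''(η) + 2η φ'(η) − 2α φ(η) = 0 for all η ∈ ℝ, then there exist constants c₁, c₂ ∈ ℝ such that φ(η) = c₁ M(−α/2, 1/2, −η²) + c₂ η M(−α/2 + 1/2, 3/2, −η²) for all η ∈ ℝ. -/

import Mathlib

/-- Kummer confluent hypergeometric function `M(a,b,z) = ∑ (a)ₛ/((b)ₛ s!) zˢ`. -/
noncomputable def kummerM (a b z : ℝ) : ℝ :=
  ∑' n : ℕ, ((ascPochhammer ℝ n).eval a / ((ascPochhammer ℝ n).eval b * n.factorial)) * z ^ n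

/-- Error function `erf z = (2/√π) ∫₀ᶻ e^{-u²} du`. -/
noncomputable def erf (z : ℝ) : ℝ := (2 / Real.sqrt Real.pi) * ∫ u in (0:ℝ)..z, Real.exp (-u^2)

/-- Complementary error function. -/
noncomputable def erfc (z : ℝ) : ℝ := 1 - erf z

/-- Repeated integrals of the complementary error function:
`i⁰erfc = erfc`, `iⁿ⁺¹erfc z = ∫_z^∞ iⁿerfc t dt`. -/
noncomputable def inerfc : ℕ → ℝ → ℝ
  | 0 => erfc
  | (n+1) => fun z => ∫ t in Set.Ici z, inerfc n t

/-!
Kummer's function satisfies `z M'' + (b - z) M' - a M = 0`: this is the coefficient recurrence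
`(n + 1) (b + n) cₙ₊₁ = (a + n) cₙ` of its (entire) power series. Substituting `z = -η²` turns
Kummer's equation into (A.1) for `M(-α/2, 1/2, -η²)` and for `η M(-α/2 + 1/2, 3/2, -η²)`, whose
values and slopes at `0` are `(1, 0)` and `(0, 1)`. Hence `φ - φ(0) · first - φ'(0) · second`
solves the linear equation (A.1) with zero initial data and vanishes by uniqueness of solutions of
Lipschitz ODEs.
-/

open Filter Set

noncomputable def powerSeriesSum (c : ℕ → ℝ) (x : ℝ) : ℝ := ∑' n, c n * x ^ n

def derivCoeff (c : ℕ → ℝ) (n : ℕ) : ℝ := (n + 1) * c (n + 1)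

theorem powerSeriesSum_zero (c : ℕ → ℝ) : powerSeriesSum c 0 = c 0 := by
  rw [powerSeriesSum, tsum_eq_single 0 fun n hn => by simp [hn]]
  simp

-- Iterating gives `|cₙ| ≤ |c₀| Bⁿ / n!`, for `c` and for all its termwise derivatives.
def IsFactorialDecay (B : ℝ) (c : ℕ → ℝ) : Prop := ∀ n : ℕ, |c (n + 1)| * (n + 1) ≤ B * |c n|

namespace IsFactorialDecay

variable {B : ℝ} {c : ℕ → ℝ}

theorem derivCoeff (hc : IsFactorialDecay B c) : IsFactorialDecay B (derivCoeff c) := by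
  intro n
  simp only [_root_.derivCoeff, abs_mul, Nat.cast_add, Nat.cast_one]
  rw [abs_of_pos (by positivity : (0:ℝ) < n + 1 + 1), abs_of_pos (by positivity : (0:ℝ) < n + 1)]
  calc (n + 1 + 1) * |c (n + 1 + 1)| * (n + 1)
      = (|c (n + 1 + 1)| * (↑(n + 1) + 1)) * (n + 1) := by push_cast; ring
    _ ≤ B * |c (n + 1)| * (n + 1) := mul_le_mul_of_nonneg_right (hc (n + 1)) (by positivity)
    _ = B * ((n + 1) * |c (n + 1)|) := by ring

theorem summable_norm_mul_pow (hc : IsFactorialDecay B c) (x : ℝ) :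
    Summable fun n => ‖c n * x ^ n‖ := by
  refine summable_of_ratio_norm_eventually_le (r := 1 / 2) (by norm_num) ?_
  filter_upwards [eventually_ge_atTop ⌈2 * B * |x|⌉₊] with n hn
  have hBn : 2 * B * |x| ≤ n + 1 := by linarith [Nat.ceil_le.mp hn]
  simp only [norm_mul, norm_pow, Real.norm_eq_abs, abs_abs]
  refine le_of_mul_le_mul_left ?_ (by positivity : (0:ℝ) < n + 1)
  calc (n + 1 : ℝ) * (|c (n + 1)| * |x| ^ (n + 1))
      = (|c (n + 1)| * (n + 1)) * (|x| * |x| ^ n) := by ring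
    _ ≤ (B * |c n|) * (|x| * |x| ^ n) := mul_le_mul_of_nonneg_right (hc n) (by positivity)
    _ = (2 * B * |x|) * (1 / 2 * (|c n| * |x| ^ n)) := by ring
    _ ≤ (n + 1) * (1 / 2 * (|c n| * |x| ^ n)) := by gcongr

theorem hasSum (hc : IsFactorialDecay B c) (x : ℝ) :
    HasSum (fun n => c n * x ^ n) (powerSeriesSum c x) :=
  (hc.summable_norm_mul_pow x).of_norm.hasSum

theorem hasSum_mul_pow_sub_one (hc : IsFactorialDecay B c) (x : ℝ) :
    HasSum (fun n => c n * (n * x ^ (n - 1))) (powerSeriesSum (_root_.derivCoeff c) x) := by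
  have h := (hasSum_nat_add_iff (f := fun n : ℕ => c n * (n * x ^ (n - 1))) 1).mp <| by
    refine (hc.derivCoeff.hasSum x).congr_fun fun n => ?_
    simp only [_root_.derivCoeff, Nat.add_sub_cancel]
    push_cast; ring
  simpa using h

theorem hasDerivAt (hc : IsFactorialDecay B c) (x : ℝ) :
    HasDerivAt (powerSeriesSum c) (powerSeriesSum (_root_.derivCoeff c) x) x := by
  set R := |x| + 1
  have hR : 1 ≤ R := le_add_of_nonneg_left (abs_nonneg x)
  have hx : x ∈ Metric.ball (0 : ℝ) R := by simp [R]
  rw [← (hc.hasSum_mul_pow_sub_one x).tsum_eq]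
  refine hasDerivAt_tsum_of_isPreconnected (hc.summable_norm_mul_pow (2 * R)) Metric.isOpen_ball
    (convex_ball 0 R).isPreconnected (fun n y _ => (hasDerivAt_pow n y).const_mul (c n)) ?_ hx
    (hc.hasSum x).summable hx
  intro n y hy
  have hyR : |y| ≤ R := by rw [Metric.mem_ball, Real.dist_0_eq_abs] at hy; exact hy.le
  have hn : (n : ℝ) ≤ 2 ^ n := by exact_mod_cast n.lt_two_pow_self.le
  have hpow : |y| ^ (n - 1) ≤ R ^ n :=
    (pow_le_pow_left₀ (abs_nonneg y) hyR _).trans (pow_le_pow_right₀ hR (n.sub_le 1))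
  simp only [norm_mul, norm_pow, Real.norm_eq_abs, Nat.abs_cast, mul_pow, abs_two,
    abs_of_nonneg (zero_le_one.trans hR)]
  gcongr

theorem hasSum_natCast_mul (hc : IsFactorialDecay B c) (x : ℝ) :
    HasSum (fun n => n * c n * x ^ n) (x * powerSeriesSum (_root_.derivCoeff c) x) := by
  have h := (hasSum_nat_add_iff (f := fun n : ℕ => n * c n * x ^ n) 1).mp <| by
    refine ((hc.derivCoeff.hasSum x).mul_left x).congr_fun fun n => ?_
    simp only [_root_.derivCoeff]
    push_cast; ring
  simpa using h

end IsFactorialDecay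

-- (A.1) as a first-order system for `(φ, φ')`.
def IsSolutionPair (α : ℝ) (f g : ℝ → ℝ) : Prop :=
  ∀ t, HasDerivAt f (g t) t ∧ HasDerivAt g (2 * α * f t - 2 * t * g t) t

theorem lipschitzWith_odeField {α s T : ℝ} (hs : |s| ≤ T) :
    LipschitzWith (1 + 2 * |α| + 2 * T).toNNReal
      (fun p : ℝ × ℝ => (p.2, 2 * α * p.1 - 2 * s * p.2)) := by
  refine LipschitzWith.of_dist_le_mul fun p q => ?_
  have hT : 0 ≤ T := (abs_nonneg s).trans hs
  rw [Real.coe_toNNReal _ (by positivity)]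
  simp only [Prod.dist_eq, Real.dist_eq] at *
  set d := max |p.1 - q.1| |p.2 - q.2|
  have h₁ : |p.1 - q.1| ≤ d := le_max_left _ _
  have h₂ : |p.2 - q.2| ≤ d := le_max_right _ _
  have hd : 0 ≤ d := (abs_nonneg _).trans h₁
  refine max_le (by nlinarith [abs_nonneg α]) ?_
  calc |2 * α * p.1 - 2 * s * p.2 - (2 * α * q.1 - 2 * s * q.2)|
      = |2 * α * (p.1 - q.1) - 2 * s * (p.2 - q.2)| := by ring_nf
    _ ≤ 2 * |α| * |p.1 - q.1| + 2 * |s| * |p.2 - q.2| := by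
        refine (abs_sub _ _).trans_eq ?_
        simp only [abs_mul, abs_two]
    _ ≤ 2 * |α| * d + 2 * T * d := by gcongr
    _ ≤ (1 + 2 * |α| + 2 * T) * d := by nlinarith

namespace IsSolutionPair

variable {α : ℝ} {f g f₁ g₁ f₂ g₂ : ℝ → ℝ}

theorem sub (h₁ : IsSolutionPair α f₁ g₁) (h₂ : IsSolutionPair α f₂ g₂) :
    IsSolutionPair α (f₁ - f₂) (g₁ - g₂) := fun t =>
  ⟨(h₁ t).1.sub (h₂ t).1, ((h₁ t).2.sub (h₂ t).2).congr_deriv (by simp only [Pi.sub_apply]; ring)⟩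

theorem smul (h : IsSolutionPair α f g) (k : ℝ) : IsSolutionPair α (k • f) (k • g) := fun t =>
  ⟨(h t).1.const_smul k,
    ((h t).2.const_smul k).congr_deriv (by simp only [Pi.smul_apply, smul_eq_mul]; ring)⟩

theorem eq_zero_of_initial_eq_zero (h : IsSolutionPair α f g) (hf : f 0 = 0) (hg : g 0 = 0)
    (t : ℝ) : f t = 0 := by
  -- the field is Lipschitz uniformly only for bounded times
  set T := |t| + 1
  have hmem : ∀ {s}, |s| < T → s ∈ Ioo (-T) T := fun hs => abs_lt.mp hs
  have huniq := ODE_solution_unique_of_mem_Ioo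
    (v := fun s (p : ℝ × ℝ) => (p.2, 2 * α * p.1 - 2 * s * p.2)) (s := fun _ => univ)
    (fun s hs => (lipschitzWith_odeField (abs_lt.mpr hs).le).lipschitzOnWith)
    (t₀ := 0) (hmem (by simp only [abs_zero, T]; positivity))
    (f := fun s => (f s, g s)) (g := fun _ => 0)
    (fun s _ => ⟨(h s).1.prodMk (h s).2, trivial⟩)
    (fun s _ => ⟨by convert hasDerivAt_const s (0 : ℝ × ℝ) using 1; simp, trivial⟩)
    (by simp [hf, hg])
  simpa using congrArg Prod.fst (huniq (hmem (lt_add_one _)))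

end IsSolutionPair

noncomputable def kummerCoeff (a b : ℝ) (n : ℕ) : ℝ :=
  (ascPochhammer ℝ n).eval a / ((ascPochhammer ℝ n).eval b * n.factorial)

theorem kummerM_eq_powerSeriesSum (a b : ℝ) :
    kummerM a b = powerSeriesSum (kummerCoeff a b) := rfl

theorem kummerM_zero (a b : ℝ) : kummerM a b 0 = 1 := by
  simp [kummerM_eq_powerSeriesSum, powerSeriesSum_zero, kummerCoeff]

theorem kummerCoeff_succ_mul {b : ℝ} (hb : 0 < b) (a : ℝ) (n : ℕ) :
    kummerCoeff a b (n + 1) * ((n + 1) * (b + n)) = kummerCoeff a b n * (a + n) := by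
  have hpb := ascPochhammer_pos n b hb
  have hbn : 0 < b + n := by positivity
  simp only [kummerCoeff, ascPochhammer_succ_eval, Nat.factorial_succ, Nat.cast_mul,
    Nat.cast_succ]
  field_simp

theorem isFactorialDecay_kummerCoeff {b : ℝ} (hb : 0 < b) (a : ℝ) :
    IsFactorialDecay (|a| / b + 1) (kummerCoeff a b) := by
  intro n
  have hbn : 0 < b + n := by positivity
  have hrat : |a + n| ≤ (|a| / b + 1) * (b + n) := by
    have : 0 ≤ |a| / b * n + b := by positivity
    calc |a + n| ≤ |a| + n := (abs_add_le _ _).trans_eq (by simp)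
      _ ≤ |a| + n + (|a| / b * n + b) := by linarith
      _ = (|a| / b + 1) * (b + n) := by field_simp; ring
  refine le_of_mul_le_mul_right ?_ hbn
  calc |kummerCoeff a b (n + 1)| * (n + 1) * (b + n)
      = |kummerCoeff a b (n + 1) * ((n + 1) * (b + n))| := by
        rw [abs_mul, abs_of_pos (by positivity : (0:ℝ) < (n + 1) * (b + n))]; ring
    _ = |kummerCoeff a b n| * |a + n| := by rw [kummerCoeff_succ_mul hb, abs_mul]
    _ ≤ |kummerCoeff a b n| * ((|a| / b + 1) * (b + n)) := by gcongr
    _ = (|a| / b + 1) * |kummerCoeff a b n| * (b + n) := by ring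

theorem kummerM_ode {b : ℝ} (hb : 0 < b) (a z : ℝ) :
    z * powerSeriesSum (derivCoeff (derivCoeff (kummerCoeff a b))) z
      + (b - z) * powerSeriesSum (derivCoeff (kummerCoeff a b)) z - a * kummerM a b z = 0 := by
  have hc := isFactorialDecay_kummerCoeff hb a
  have h := (((hc.derivCoeff.hasSum_natCast_mul z).add ((hc.derivCoeff.hasSum z).mul_left b)).sub
    (hc.hasSum_natCast_mul z)).sub ((hc.hasSum z).mul_left a)
  have h0 : HasSum (fun _ : ℕ => (0 : ℝ)) _ := h.congr_fun fun n => by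
    simp only [derivCoeff]
    linear_combination (-z ^ n) * kummerCoeff_succ_mul hb a n
  rw [kummerM_eq_powerSeriesSum]
  linear_combination h0.unique hasSum_zero

theorem hasDerivAt_comp_neg_sq {F F' : ℝ → ℝ} (hF : ∀ z, HasDerivAt F (F' z) z) (t : ℝ) :
    HasDerivAt (fun η => F (-η ^ 2)) (-2 * t * F' (-t ^ 2)) t :=
  ((hF _).comp t (hasDerivAt_pow 2 t).neg).congr_deriv (by
    simp only [Pi.neg_apply, Nat.cast_ofNat, Nat.add_one_sub_one, pow_one, mul_neg, neg_mul,
      neg_inj]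
    ring)

theorem isSolutionPair_kummerM_even (α : ℝ) :
    IsSolutionPair α (fun η => kummerM (-α / 2) (1 / 2) (-η ^ 2))
      (fun η => -2 * η * powerSeriesSum (derivCoeff (kummerCoeff (-α / 2) (1 / 2))) (-η ^ 2)) := by
  have hc := isFactorialDecay_kummerCoeff (by norm_num : (0:ℝ) < 1 / 2) (-α / 2)
  refine fun t => ⟨hasDerivAt_comp_neg_sq hc.hasDerivAt t, ?_⟩
  refine (((hasDerivAt_id t).const_mul (-2)).mul
    (hasDerivAt_comp_neg_sq hc.derivCoeff.hasDerivAt t)).congr_deriv ?_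
  simp only [id]
  linear_combination (-4) * kummerM_ode (by norm_num : (0:ℝ) < 1 / 2) (-α / 2) (-t ^ 2)

theorem isSolutionPair_kummerM_odd (α : ℝ) :
    IsSolutionPair α (fun η => η * kummerM (-α / 2 + 1 / 2) (3 / 2) (-η ^ 2))
      (fun η => kummerM (-α / 2 + 1 / 2) (3 / 2) (-η ^ 2)
        - 2 * η ^ 2 *
          powerSeriesSum (derivCoeff (kummerCoeff (-α / 2 + 1 / 2) (3 / 2))) (-η ^ 2)) := by
  have hc := isFactorialDecay_kummerCoeff (by norm_num : (0:ℝ) < 3 / 2) (-α / 2 + 1 / 2)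
  refine fun t => ⟨((hasDerivAt_id t).mul (hasDerivAt_comp_neg_sq hc.hasDerivAt t)).congr_deriv
    (by simp only [id, kummerM_eq_powerSeriesSum]; ring), ?_⟩
  refine ((hasDerivAt_comp_neg_sq hc.hasDerivAt t).sub (((hasDerivAt_pow 2 t).const_mul 2).mul
    (hasDerivAt_comp_neg_sq hc.derivCoeff.hasDerivAt t))).congr_deriv ?_
  linear_combination
    (-4 * t) * kummerM_ode (by norm_num : (0:ℝ) < 3 / 2) (-α / 2 + 1 / 2) (-t ^ 2)

theorem ode_general_solution_general
    (α : ℝ) (φ : ℝ → ℝ)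
    (hφ : ∀ η : ℝ, DifferentiableAt ℝ φ η)
    (hφ' : ∀ η : ℝ, DifferentiableAt ℝ (deriv φ) η)
    (hode : ∀ η : ℝ, deriv (deriv φ) η + 2 * η * deriv φ η - 2 * α * φ η = 0) :
    ∃ c₁ c₂ : ℝ, ∀ η : ℝ,
      φ η = c₁ * kummerM (-α / 2) (1 / 2) (-η ^ 2) +
        c₂ * η * kummerM (-α / 2 + 1 / 2) (3 / 2) (-η ^ 2) := by
  have hφsol : IsSolutionPair α φ (deriv φ) := fun t =>
    ⟨(hφ t).hasDerivAt, (hφ' t).hasDerivAt.congr_deriv (by linarith [hode t])⟩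
  have hψ := (hφsol.sub ((isSolutionPair_kummerM_even α).smul (φ 0))).sub
    ((isSolutionPair_kummerM_odd α).smul (deriv φ 0))
  refine ⟨φ 0, deriv φ 0, fun η => ?_⟩
  have hψη := hψ.eq_zero_of_initial_eq_zero (by simp [kummerM_zero]) (by simp [kummerM_zero]) η
  simp only [Pi.sub_apply, Pi.smul_apply, smul_eq_mul] at hψη
  linarith

/-- For `α ≥ 0`, every twice differentiable solution of `φ'' + 2ηφ' - 2αφ = 0` is a linear
combination of `M(-α/2,1/2,-η²)` and `η M(-α/2+1/2,3/2,-η²)`. -/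
theorem ode_general_solution
    (α : ℝ) (hα : 0 ≤ α) (φ : ℝ → ℝ)
    (hφ : ∀ η : ℝ, DifferentiableAt ℝ φ η)
    (hφ' : ∀ η : ℝ, DifferentiableAt ℝ (deriv φ) η)
    (hode : ∀ η : ℝ, deriv (deriv φ) η + 2 * η * deriv φ η - 2 * α * φ η = 0) :
    ∃ c₁ c₂ : ℝ, ∀ η : ℝ,
      φ η = c₁ * kummerM (-α / 2) (1 / 2) (-η ^ 2) +
        c₂ * η * kummerM (-α / 2 + 1 / 2) (3 / 2) (-η ^ 2) :=
  ode_general_solution_general α φ hφ hφ' hode
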